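/- Under the hypotheses of Theorem 4.2 (A with full first row/column and zeros elsewhere, strictly A-coupled-expanding f with expansion ratios λᵢ on pieces Vᵢ, conjugacy g : Σₘ⁺(A) → V with f∘g = g∘σ_A), the maps S₁ = (f|_{V₁})^{-1}|_V and Sᵢ = (f²|_{Vᵢ})^{-1}|_V for 2 ≤ i ≤ m are contracting similarities on V with ratios 1/λ₁ and 1/(λ₁λᵢ) respectively, and V = ⋃_{i=1}^m Sᵢ(V) with the union disjoint. -/

import Mathlib

/-!
A point lies in the invariant set iff its orbit visits the pieces along an `A`-admissible
itinerary. For this `A` every transition out of `0` is allowed, and out of `i ≠ 0` only the one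
into `0`. So an itinerary is either `0` followed by any itinerary, or `i, 0` followed by any
itinerary: the inverse branches `(f|_{V 0})⁻¹` and `(f|_{V i})⁻¹ ∘ (f|_{V 0})⁻¹` map the
invariant set into itself, and by injectivity of `f` on each piece their images cover it. The
images lie in the separated pieces `V i`, hence are disjoint, and inverting an expansion by `λ`
on a piece gives a similarity of ratio `λ⁻¹`.
-/

open Set Function

section Similarity

variable {X Y : Type*} [PseudoMetricSpace Y] {f : X → Y} {s : Set X} {c : ℝ}

theorem injOn_of_dist_eq_mul [MetricSpace X] (hc : c ≠ 0)
    (hf : ∀ x ∈ s, ∀ y ∈ s, dist (f x) (f y) = c * dist x y) : InjOn f s :=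
  fun x hx y hy hxy => by simpa [hxy, hc] using hf x hx y hy

theorem dist_invFunOn_eq [PseudoMetricSpace X] [Nonempty X] {t : Set Y} (hc : c ≠ 0)
    (hf : ∀ x ∈ s, ∀ y ∈ s, dist (f x) (f y) = c * dist x y) (hst : SurjOn f s t)
    {x y : Y} (hx : x ∈ t) (hy : y ∈ t) :
    dist (invFunOn f s x) (invFunOn f s y) = c⁻¹ * dist x y := by
  have h := hf _ (hst.mapsTo_invFunOn hx) _ (hst.mapsTo_invFunOn hy)
  rw [hst.rightInvOn_invFunOn hx, hst.rightInvOn_invFunOn hy] at h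
  rw [h, inv_mul_cancel_left₀ hc]

end Similarity

theorem disjoint_of_forall_le_dist {X : Type*} [PseudoMetricSpace X] {s t : Set X}
    (h : ∃ ε > 0, ∀ x ∈ s, ∀ y ∈ t, ε ≤ dist x y) : Disjoint s t := by
  obtain ⟨ε, hε, h⟩ := h
  exact disjoint_left.2 fun x hs ht => (h x hs x ht).not_gt (by simpa using hε)

section Coding

variable {X ι : Type*}

/-- The invariant set `V = g(Σₘ⁺(A))` of the paper. -/
def codingSet (A : Matrix ι ι ℕ) (V : ι → Set X) (f : X → X) : Set X :=
  ⋃ α : {α : ℕ → ι // ∀ n, A (α n) (α (n + 1)) = 1}, ⋂ k : ℕ, (f^[k]) ⁻¹' (V (α.1 k))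

def IsItinerary (A : Matrix ι ι ℕ) (V : ι → Set X) (f : X → X) (α : ℕ → ι) (x : X) : Prop :=
  (∀ n, A (α n) (α (n + 1)) = 1) ∧ ∀ k, f^[k] x ∈ V (α k)

variable {A : Matrix ι ι ℕ} {V : ι → Set X} {f : X → X} {α : ℕ → ι} {x : X}

theorem mem_codingSet : x ∈ codingSet A V f ↔ ∃ α, IsItinerary A V f α x := by
  simp only [codingSet, IsItinerary, mem_iUnion, mem_iInter, mem_preimage, Subtype.exists,
    exists_prop]

theorem IsItinerary.mem (h : IsItinerary A V f α x) : x ∈ V (α 0) := h.2 0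

theorem IsItinerary.tail (h : IsItinerary A V f α x) :
    IsItinerary A V f (fun n => α (n + 1)) (f x) :=
  ⟨fun n => h.1 (n + 1), fun k => h.2 (k + 1)⟩

theorem IsItinerary.cons {i : ι} (hx : x ∈ V i) (hA : A i (α 0) = 1)
    (h : IsItinerary A V f α (f x)) :
    IsItinerary A V f (fun | 0 => i | n + 1 => α n) x :=
  ⟨fun | 0 => hA | n + 1 => h.1 n, fun | 0 => hx | k + 1 => h.2 k⟩

theorem codingSet_subset_iUnion : codingSet A V f ⊆ ⋃ i, V i := fun _ hx =>
  have ⟨_, h⟩ := mem_codingSet.1 hx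
  mem_iUnion.2 ⟨_, h.mem⟩

end Coding

section BranchInverse

variable {X ι : Type*} [Zero ι] {A : Matrix ι ι ℕ} {V : ι → Set X} {f : X → X}

theorem surjOn_codingSet (h0 : ∀ j, SurjOn f (V 0) (V j)) :
    SurjOn f (V 0) (codingSet A V f) := fun _ hx =>
  have ⟨j, hj⟩ := mem_iUnion.1 (codingSet_subset_iUnion hx)
  h0 j hj

variable [Nonempty X] [DecidableEq ι]

/-- The paper's `Sᵢ`; for `i ≠ 0` it is the branch of `(f²|_{V i})⁻¹` passing through `V 0`. -/
noncomputable def branchInverse (V : ι → Set X) (f : X → X) (i : ι) : X → X :=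
  if i = 0 then invFunOn f (V 0) else invFunOn f (V i) ∘ invFunOn f (V 0)

theorem branchInverse_zero : branchInverse V f 0 = invFunOn f (V 0) := if_pos rfl

theorem branchInverse_of_ne_zero {i : ι} (hi : i ≠ 0) :
    branchInverse V f i = invFunOn f (V i) ∘ invFunOn f (V 0) := if_neg hi

theorem mapsTo_branchInverse (h0 : ∀ j, SurjOn f (V 0) (V j))
    (hi0 : ∀ i, SurjOn f (V i) (V 0)) (i : ι) :
    MapsTo (branchInverse V f i) (codingSet A V f) (V i) := by
  have hW := (surjOn_codingSet (A := A) h0).mapsTo_invFunOn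
  rcases eq_or_ne i 0 with rfl | hi
  · rwa [branchInverse_zero]
  · rw [branchInverse_of_ne_zero hi]
    exact (hi0 i).mapsTo_invFunOn.comp hW

theorem rightInvOn_branchInverse_zero (h0 : ∀ j, SurjOn f (V 0) (V j)) :
    RightInvOn (branchInverse V f 0) f (codingSet A V f) :=
  branchInverse_zero (V := V) (f := f) ▸ (surjOn_codingSet h0).rightInvOn_invFunOn

theorem rightInvOn_branchInverse_of_ne_zero (h0 : ∀ j, SurjOn f (V 0) (V j)) {i : ι}
    (hi0 : SurjOn f (V i) (V 0)) (hi : i ≠ 0) :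
    RightInvOn (branchInverse V f i) (f^[2]) (codingSet A V f) := fun x hx => by
  have hW := surjOn_codingSet (A := A) h0
  rw [branchInverse_of_ne_zero hi, comp_apply, iterate_succ_apply', iterate_one,
    hi0.rightInvOn_invFunOn (hW.mapsTo_invFunOn hx), hW.rightInvOn_invFunOn hx]

theorem mapsTo_branchInverse_codingSet (hA0 : ∀ j, A 0 j = 1) (hAi0 : ∀ i, A i 0 = 1)
    (h0 : ∀ j, SurjOn f (V 0) (V j)) (hi0 : ∀ i, SurjOn f (V i) (V 0)) (i : ι) :
    MapsTo (branchInverse V f i) (codingSet A V f) (codingSet A V f) := by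
  intro y hy
  obtain ⟨α, hα⟩ := mem_codingSet.1 hy
  have hW := surjOn_codingSet (A := A) h0
  have hx := hW.mapsTo_invFunOn hy
  have hzero : IsItinerary A V f _ (invFunOn f (V 0) y) :=
    .cons hx (hA0 _) ((hW.rightInvOn_invFunOn hy).symm ▸ hα)
  refine mem_codingSet.2 ?_
  rcases eq_or_ne i 0 with rfl | hi
  · exact branchInverse_zero (V := V) (f := f) ▸ ⟨_, hzero⟩
  · rw [branchInverse_of_ne_zero hi]
    exact ⟨_, .cons ((hi0 i).mapsTo_invFunOn hx) (hAi0 i)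
      (((hi0 i).rightInvOn_invFunOn hx).symm ▸ hzero)⟩

theorem codingSet_subset_iUnion_image (hA : ∀ i j, i ≠ 0 → A i j = 1 → j = 0)
    (hinj : ∀ i, InjOn f (V i)) :
    codingSet A V f ⊆ ⋃ i, branchInverse V f i '' codingSet A V f := by
  intro x hx
  obtain ⟨α, hα⟩ := mem_codingSet.1 hx
  refine mem_iUnion.2 ⟨α 0, ?_⟩
  rcases eq_or_ne (α 0) 0 with h | hi
  · refine ⟨f x, mem_codingSet.2 ⟨_, hα.tail⟩, ?_⟩
    rw [h, branchInverse_zero]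
    exact (hinj 0).leftInvOn_invFunOn (h ▸ hα.mem)
  · have hfx : f x ∈ V 0 := hA _ _ hi (hα.1 0) ▸ hα.tail.mem
    refine ⟨f (f x), mem_codingSet.2 ⟨_, hα.tail.tail⟩, ?_⟩
    rw [branchInverse_of_ne_zero hi, comp_apply, (hinj 0).leftInvOn_invFunOn hfx,
      (hinj _).leftInvOn_invFunOn hα.mem]

theorem dist_branchInverse_zero [PseudoMetricSpace X] {c : ℝ} (hc : c ≠ 0)
    (hf : ∀ x ∈ V 0, ∀ y ∈ V 0, dist (f x) (f y) = c * dist x y)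
    (h0 : ∀ j, SurjOn f (V 0) (V j)) {x y : X} (hx : x ∈ codingSet A V f)
    (hy : y ∈ codingSet A V f) :
    dist (branchInverse V f 0 x) (branchInverse V f 0 y) = c⁻¹ * dist x y := by
  rw [branchInverse_zero]
  exact dist_invFunOn_eq hc hf (surjOn_codingSet h0) hx hy

theorem dist_branchInverse_of_ne_zero [PseudoMetricSpace X] {i : ι} (hi : i ≠ 0) {c₀ c : ℝ}
    (hc₀ : c₀ ≠ 0) (hc : c ≠ 0)
    (hf₀ : ∀ x ∈ V 0, ∀ y ∈ V 0, dist (f x) (f y) = c₀ * dist x y)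
    (hf : ∀ x ∈ V i, ∀ y ∈ V i, dist (f x) (f y) = c * dist x y)
    (h0 : ∀ j, SurjOn f (V 0) (V j)) (hi0 : SurjOn f (V i) (V 0)) {x y : X}
    (hx : x ∈ codingSet A V f) (hy : y ∈ codingSet A V f) :
    dist (branchInverse V f i x) (branchInverse V f i y) = (c₀ * c)⁻¹ * dist x y := by
  have hW := surjOn_codingSet (A := A) h0
  rw [branchInverse_of_ne_zero hi, comp_apply, comp_apply,
    dist_invFunOn_eq hc hf hi0 (hW.mapsTo_invFunOn hx) (hW.mapsTo_invFunOn hy),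
    dist_invFunOn_eq hc₀ hf₀ hW hx hy, mul_inv_rev, mul_assoc]

end BranchInverse

theorem stmt15_general {d m : ℕ}
    (A : Matrix (Fin (m + 2)) (Fin (m + 2)) ℕ)
    (hA : ∀ i j, A i j = if i = 0 ∨ j = 0 then 1 else 0)
    (V : Fin (m + 2) → Set (EuclideanSpace ℝ (Fin d)))
    (hsep : ∀ i j, i ≠ j → ∃ ε > 0, ∀ x ∈ V i, ∀ y ∈ V j, ε ≤ dist x y)
    (f : EuclideanSpace ℝ (Fin d) → EuclideanSpace ℝ (Fin d))
    (hcover : ∀ i j, A i j = 1 → V j ⊆ f '' V i)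
    (lam : Fin (m + 2) → ℝ) (hlam : ∀ i, 1 < lam i)
    (hexp : ∀ i, ∀ x ∈ V i, ∀ y ∈ V i, dist (f x) (f y) = lam i * dist x y)
    (W : Set (EuclideanSpace ℝ (Fin d)))
    (hW : W = ⋃ α : {α : ℕ → Fin (m + 2) // ∀ n, A (α n) (α (n + 1)) = 1},
        ⋂ k : ℕ, (f^[k]) ⁻¹' (V (α.1 k))) :
    ∃ S : Fin (m + 2) → EuclideanSpace ℝ (Fin d) → EuclideanSpace ℝ (Fin d),
      (∀ x ∈ W, S 0 x ∈ V 0 ∧ f (S 0 x) = x) ∧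
      (∀ i : Fin (m + 2), i ≠ 0 → ∀ x ∈ W, S i x ∈ V i ∧ (f^[2]) (S i x) = x) ∧
      (∀ x ∈ W, ∀ y ∈ W, dist (S 0 x) (S 0 y) = (lam 0)⁻¹ * dist x y) ∧
      (∀ i : Fin (m + 2), i ≠ 0 → ∀ x ∈ W, ∀ y ∈ W,
        dist (S i x) (S i y) = (lam 0 * lam i)⁻¹ * dist x y) ∧
      W = ⋃ i, S i '' W ∧
      (∀ i j, i ≠ j → Disjoint (S i '' W) (S j '' W)) := by
  obtain rfl : W = codingSet A V f := hW
  have hlam0 i : lam i ≠ 0 := (one_pos.trans (hlam i)).ne'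
  have h0 j : SurjOn f (V 0) (V j) := hcover 0 j (by simp [hA])
  have hi0 i : SurjOn f (V i) (V 0) := hcover i 0 (by simp [hA])
  have hmaps := mapsTo_branchInverse (A := A) h0 hi0
  refine ⟨branchInverse V f,
    fun x hx => ⟨hmaps 0 hx, rightInvOn_branchInverse_zero h0 hx⟩,
    fun i hi x hx => ⟨hmaps i hx, rightInvOn_branchInverse_of_ne_zero h0 (hi0 i) hi hx⟩,
    fun x hx y hy => dist_branchInverse_zero (hlam0 0) (hexp 0) h0 hx hy,
    fun i hi x hx y hy => dist_branchInverse_of_ne_zero hi (hlam0 0) (hlam0 i) (hexp 0) (hexp i)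
      h0 (hi0 i) hx hy,
    subset_antisymm ?_ (iUnion_subset fun i => ?_),
    fun i j hij => (disjoint_of_forall_le_dist (hsep i j hij)).mono (hmaps i).image_subset
      (hmaps j).image_subset⟩
  · refine codingSet_subset_iUnion_image (fun i j hi hij => ?_)
      fun i => injOn_of_dist_eq_mul (hlam0 i) (hexp i)
    simpa [hA, hi] using hij
  · exact (mapsTo_branchInverse_codingSet (by simp [hA]) (by simp [hA]) h0 hi0 i).image_subset

/-- under the hypotheses of Theorem 4.2 (A with full first row
and column, zeros elsewhere; strictly A-coupled-expanding f with similarity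
expansion ratios λᵢ; conjugacy g : Σₘ⁺(A) → V with f∘g = g∘σ_A), the maps
S₁ = (f|_{V₁})⁻¹|_V and Sᵢ = (f²|_{Vᵢ})⁻¹|_V (i ≥ 2) are contracting
similarities with ratios 1/λ₁ and 1/(λ₁λᵢ), and V = ⋃ᵢ Sᵢ(V) disjointly. -/
theorem stmt15 {d m : ℕ}
    (A : Matrix (Fin (m + 2)) (Fin (m + 2)) ℕ)
    (hA : ∀ i j, A i j = if i = 0 ∨ j = 0 then 1 else 0)
    (V : Fin (m + 2) → Set (EuclideanSpace ℝ (Fin d)))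
    (hVc : ∀ i, IsCompact (V i))
    (hsep : ∀ i j, i ≠ j → ∃ ε > 0, ∀ x ∈ V i, ∀ y ∈ V j, ε ≤ dist x y)
    (f : EuclideanSpace ℝ (Fin d) → EuclideanSpace ℝ (Fin d))
    (hf : ContinuousOn f (⋃ i, V i))
    (hcover : ∀ i j, A i j = 1 → V j ⊆ f '' V i)
    (lam : Fin (m + 2) → ℝ) (hlam : ∀ i, 1 < lam i)
    (hexp : ∀ i, ∀ x ∈ V i, ∀ y ∈ V i, dist (f x) (f y) = lam i * dist x y)
    (W : Set (EuclideanSpace ℝ (Fin d)))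
    (hW : W = ⋃ α : {α : ℕ → Fin (m + 2) // ∀ n, A (α n) (α (n + 1)) = 1},
        ⋂ k : ℕ, (f^[k]) ⁻¹' (V (α.1 k)))
    (g : {α : ℕ → Fin (m + 2) // ∀ n, A (α n) (α (n + 1)) = 1} ≃ₜ W)
    (hg : ∀ α, f (g α) = g ⟨fun n => α.1 (n + 1), fun n => α.2 (n + 1)⟩) :
    ∃ S : Fin (m + 2) → EuclideanSpace ℝ (Fin d) → EuclideanSpace ℝ (Fin d),
      (∀ x ∈ W, S 0 x ∈ V 0 ∧ f (S 0 x) = x) ∧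
      (∀ i : Fin (m + 2), i ≠ 0 → ∀ x ∈ W, S i x ∈ V i ∧ (f^[2]) (S i x) = x) ∧
      (∀ x ∈ W, ∀ y ∈ W, dist (S 0 x) (S 0 y) = (lam 0)⁻¹ * dist x y) ∧
      (∀ i : Fin (m + 2), i ≠ 0 → ∀ x ∈ W, ∀ y ∈ W,
        dist (S i x) (S i y) = (lam 0 * lam i)⁻¹ * dist x y) ∧
      W = ⋃ i, S i '' W ∧
      (∀ i j, i ≠ j → Disjoint (S i '' W) (S j '' W)) :=
  stmt15_general A hA V hsep f hcover lam hlam hexp W hW
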